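/- Let A ∈ ℝ^{n×N} have unit-norm columns a_1,…,a_N, let W_1,…,W_N be subspaces of ℝ^M, and let μ_f be the fusion coherence of (A,(W_j)). Then every block vector h = (h_1,…,h_N), h_j ∈ ℝ^{m_j}, with A·U(h) = 0 satisfies, for every index j, ‖h_j‖_2 ≤ (1 + μ_f^{-1})^{-1} · ∑_{l=1}^N ‖h_l‖_2. -/

import Mathlib

open scoped BigOperators
open Matrix

/-- Euclidean norm of a finite-dimensional real vector. -/
noncomputable def norm2 {ι : Type*} [Fintype ι] (v : ι → ℝ) : ℝ :=
  Real.sqrt (∑ i, v i ^ 2)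

/-- Mixed ℓ₂,₁ norm of a block coefficient vector. -/
noncomputable def l21 {N : ℕ} {m : Fin N → ℕ} (c : ∀ j, Fin (m j) → ℝ) : ℝ :=
  ∑ j, norm2 (c j)

open Classical in
/-- Mixed ℓ₂,₀ "norm": number of nonzero blocks. -/
noncomputable def l20 {N : ℕ} {m : Fin N → ℕ} (c : ∀ j, Fin (m j) → ℝ) : ℕ :=
  (Finset.univ.filter fun j => c j ≠ 0).card

/-- The matrix U(c) whose j-th row is (U_j c_j)ᵀ. -/
noncomputable def Ucmat {N M : ℕ} {m : Fin N → ℕ}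
    (U : ∀ j, Matrix (Fin M) (Fin (m j)) ℝ)
    (c : ∀ j, Fin (m j) → ℝ) : Matrix (Fin N) (Fin M) ℝ :=
  Matrix.of fun j i => (U j).mulVec (c j) i

/-- The ℓ₂ → ℓ₂ operator norm of a real matrix. -/
noncomputable def opNorm {ι κ : Type*} [Fintype ι] [Fintype κ]
    (B : Matrix ι κ ℝ) : ℝ :=
  sSup {r : ℝ | ∃ v : κ → ℝ, norm2 v ≤ 1 ∧ r = norm2 (B.mulVec v)}

/-- Fusion coherence: max over j ≠ k of |⟨a_j,a_k⟩|·‖P_j P_k‖₂→₂. -/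
noncomputable def fusionCoherence {n N M : ℕ} (A : Matrix (Fin n) (Fin N) ℝ)
    (P : Fin N → Matrix (Fin M) (Fin M) ℝ) : ℝ :=
  sSup {r : ℝ | ∃ j k : Fin N, j ≠ k ∧
    r = |∑ i, A i j * A i k| * opNorm (P j * P k)}

/-!
Let `v_l = U_l h_l` be the rows of `U(h)`. Multiplying `A U(h) = 0` on the left by `Aᵀ` gives
`∑_l ⟨a_j, a_l⟩ v_l = 0`; as `⟨a_j, a_j⟩ = 1` and `P_l v_l = v_l`, applying `P_j` yields
`v_j = -∑_{l ≠ j} ⟨a_j, a_l⟩ P_j P_l v_l`. Since `U_j` is an isometry, taking norms gives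
`‖h_j‖ ≤ μ_f (∑_l ‖h_l‖ - ‖h_j‖)`, which rearranges to the claim.
-/

section norm2

variable {ι : Type*} [Fintype ι]

lemma norm2_eq_norm_toLp (v : ι → ℝ) : norm2 v = ‖WithLp.toLp 2 v‖ := by
  simp only [norm2, EuclideanSpace.norm_eq, Real.norm_eq_abs, sq_abs]

lemma norm2_nonneg (v : ι → ℝ) : 0 ≤ norm2 v :=
  Real.sqrt_nonneg _

lemma norm2_smul (r : ℝ) (v : ι → ℝ) : norm2 (r • v) = |r| * norm2 v := by
  simp only [norm2_eq_norm_toLp, WithLp.toLp_smul, norm_smul, Real.norm_eq_abs]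

lemma norm2_neg (v : ι → ℝ) : norm2 (-v) = norm2 v := by
  simp only [norm2_eq_norm_toLp, WithLp.toLp_neg, norm_neg]

lemma norm2_sum_le {κ : Type*} (s : Finset κ) (f : κ → ι → ℝ) :
    norm2 (∑ l ∈ s, f l) ≤ ∑ l ∈ s, norm2 (f l) := by
  simpa only [norm2_eq_norm_toLp, WithLp.toLp_sum] using norm_sum_le s _

lemma norm2_pos {v : ι → ℝ} (hv : v ≠ 0) : 0 < norm2 v := by
  simpa only [norm2_eq_norm_toLp, norm_pos_iff, ne_eq, WithLp.toLp_eq_zero] using hv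

lemma norm2_mulVec_of_transpose_mul_self_eq_one {κ : Type*} [Fintype κ] [DecidableEq κ]
    {U : Matrix ι κ ℝ} (hU : Uᵀ * U = 1) (c : κ → ℝ) : norm2 (U *ᵥ c) = norm2 c := by
  have hdot : (U *ᵥ c) ⬝ᵥ (U *ᵥ c) = c ⬝ᵥ c := by
    rw [dotProduct_mulVec, ← mulVec_transpose, mulVec_mulVec, hU, one_mulVec]
  simpa only [norm2, dotProduct, sq] using congrArg Real.sqrt hdot

end norm2

section opNorm

variable {ι κ : Type*} [Fintype ι] [Fintype κ]

open scoped Matrix.Norms.L2Operator in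
lemma opNorm_bddAbove (B : Matrix ι κ ℝ) :
    BddAbove {r : ℝ | ∃ v : κ → ℝ, norm2 v ≤ 1 ∧ r = norm2 (B *ᵥ v)} := by
  classical
  refine ⟨‖B‖, ?_⟩
  rintro r ⟨v, hv, rfl⟩
  simp only [norm2_eq_norm_toLp] at hv ⊢
  calc ‖WithLp.toLp 2 (B *ᵥ v)‖ ≤ ‖B‖ * ‖WithLp.toLp 2 v‖ := l2_opNorm_mulVec B _
    _ ≤ ‖B‖ := mul_le_of_le_one_right (norm_nonneg _) hv

lemma norm2_mulVec_le (B : Matrix ι κ ℝ) (v : κ → ℝ) :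
    norm2 (B *ᵥ v) ≤ opNorm B * norm2 v := by
  rcases eq_or_ne v 0 with rfl | hv
  · simp [norm2]
  have hpos := norm2_pos hv
  have hunit : norm2 ((norm2 v)⁻¹ • v) ≤ 1 := by
    rw [norm2_smul, abs_of_pos (inv_pos.mpr hpos), inv_mul_cancel₀ hpos.ne']
  have hle := le_csSup (opNorm_bddAbove B) ⟨_, hunit, rfl⟩
  rw [mulVec_smul, norm2_smul, abs_of_pos (inv_pos.mpr hpos), inv_mul_le_iff₀ hpos] at hle
  rwa [mul_comm]

end opNorm

lemma transpose_mul_self_apply {ι κ : Type*} [Fintype ι] (A : Matrix ι κ ℝ) (j k : κ) :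
    (Aᵀ * A) j k = ∑ i, A i j * A i k := by
  simp only [mul_apply, transpose_apply]

lemma transpose_mul_self_diag_eq_one {ι κ : Type*} [Fintype ι] {A : Matrix ι κ ℝ}
    (hA : ∀ j, norm2 (fun i => A i j) = 1) (j : κ) : (Aᵀ * A) j j = 1 := by
  have h := hA j
  rw [norm2, Real.sqrt_eq_one] at h
  simpa only [transpose_mul_self_apply, sq] using h

lemma abs_transpose_mul_self_mul_opNorm_le_fusionCoherence {n N M : ℕ}
    (A : Matrix (Fin n) (Fin N) ℝ) (P : Fin N → Matrix (Fin M) (Fin M) ℝ) {j k : Fin N}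
    (hjk : j ≠ k) : |(Aᵀ * A) j k| * opNorm (P j * P k) ≤ fusionCoherence A P := by
  have hbdd : BddAbove {r : ℝ | ∃ j k : Fin N, j ≠ k ∧
      r = |∑ i, A i j * A i k| * opNorm (P j * P k)} := by
    refine (Set.finite_range
      (fun p : Fin N × Fin N => |∑ i, A i p.1 * A i p.2| * opNorm (P p.1 * P p.2))).subset
      ?_ |>.bddAbove
    rintro r ⟨j, k, -, rfl⟩
    exact ⟨(j, k), rfl⟩
  rw [transpose_mul_self_apply]
  exact le_csSup hbdd ⟨j, k, hjk, rfl⟩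

lemma row_eq_neg_sum_erase_of_mul_eq_zero {ι κ ν : Type*} [Fintype ι] [Fintype κ]
    [DecidableEq κ] {A : Matrix ι κ ℝ} {B : Matrix κ ν ℝ} (hAB : A * B = 0) {j : κ}
    (hjj : (Aᵀ * A) j j = 1) :
    B j = -∑ l ∈ Finset.univ.erase j, (Aᵀ * A) j l • B l := by
  have hgram : ∑ l, (Aᵀ * A) j l • B l = 0 := by
    have h := congrFun (show Aᵀ * A * B = 0 by rw [Matrix.mul_assoc, hAB, Matrix.mul_zero]) j
    ext i
    simpa only [mul_apply, Finset.sum_apply, Pi.smul_apply, smul_eq_mul, Matrix.zero_apply,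
      Pi.zero_apply] using congrFun h i
  rw [← Finset.add_sum_erase _ _ (Finset.mem_univ j), hjj, one_smul] at hgram
  exact eq_neg_of_add_eq_zero_left hgram

lemma mul_transpose_mulVec_mulVec_of_transpose_mul_self_eq_one {ι κ : Type*} [Fintype ι]
    [Fintype κ] [DecidableEq κ] {U : Matrix ι κ ℝ} (hU : Uᵀ * U = 1) (c : κ → ℝ) :
    (U * Uᵀ) *ᵥ (U *ᵥ c) = U *ᵥ c := by
  rw [mulVec_mulVec, Matrix.mul_assoc, hU, Matrix.mul_one]

lemma le_inv_one_add_inv_mul {μ x S : ℝ} (hμ : 0 < μ) (hx : x ≤ μ * (S - x)) :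
    x ≤ (1 + μ⁻¹)⁻¹ * S := by
  have hS : (1 + μ⁻¹)⁻¹ * S = μ * S / (1 + μ) := by field_simp; ring
  rw [hS, le_div_iff₀ (by linarith)]
  linarith

lemma norm2_block_le_fusionCoherence_mul_sum_erase {n N M : ℕ} {m : Fin N → ℕ}
    {A : Matrix (Fin n) (Fin N) ℝ} (hA : ∀ j, norm2 (fun i => A i j) = 1)
    {U : ∀ j, Matrix (Fin M) (Fin (m j)) ℝ} (hU : ∀ j, (U j)ᵀ * U j = 1)
    {h : ∀ j, Fin (m j) → ℝ} (hAh : A * Ucmat U h = 0) (j : Fin N) :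
    norm2 (h j) ≤
      fusionCoherence A (fun j => U j * (U j)ᵀ) * ∑ l ∈ Finset.univ.erase j, norm2 (h l) := by
  set P : Fin N → Matrix (Fin M) (Fin M) ℝ := fun j => U j * (U j)ᵀ
  set v := Ucmat U h
  have hPv : ∀ l, P l *ᵥ v l = v l := fun l =>
    mul_transpose_mulVec_mulVec_of_transpose_mul_self_eq_one (hU l) (h l)
  have hnorm : ∀ l, norm2 (v l) = norm2 (h l) := fun l =>
    norm2_mulVec_of_transpose_mul_self_eq_one (hU l) (h l)
  -- `P l` fixes `v l`, so applying `P j` to the Gram relation brings in the products `P j * P l`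
  have hvj : v j = -∑ l ∈ Finset.univ.erase j, (Aᵀ * A) j l • (P j * P l) *ᵥ v l := by
    conv_lhs => rw [← hPv j, row_eq_neg_sum_erase_of_mul_eq_zero hAh
      (transpose_mul_self_diag_eq_one hA j)]
    simp only [mulVec_neg, mulVec_sum, mulVec_smul, ← mulVec_mulVec, hPv]
  rw [← hnorm j, hvj, norm2_neg, Finset.mul_sum]
  refine (norm2_sum_le _ _).trans (Finset.sum_le_sum fun l hl => ?_)
  have hjl : j ≠ l := (Finset.ne_of_mem_erase hl).symm
  calc norm2 ((Aᵀ * A) j l • (P j * P l) *ᵥ v l)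
      ≤ |(Aᵀ * A) j l| * (opNorm (P j * P l) * norm2 (v l)) := by
        rw [norm2_smul]
        exact mul_le_mul_of_nonneg_left (norm2_mulVec_le _ _) (abs_nonneg _)
    _ = |(Aᵀ * A) j l| * opNorm (P j * P l) * norm2 (h l) := by rw [hnorm, mul_assoc]
    _ ≤ fusionCoherence A P * norm2 (h l) :=
        mul_le_mul_of_nonneg_right
          (abs_transpose_mul_self_mul_opNorm_le_fusionCoherence A P hjl) (norm2_nonneg _)

/-- Every h in the null space of A_P satisfies, for every j,
‖h_j‖₂ ≤ (1 + μ_f⁻¹)⁻¹ ∑_l ‖h_l‖₂. -/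
theorem stmt3 {n N M : ℕ} {m : Fin N → ℕ}
    (A : Matrix (Fin n) (Fin N) ℝ)
    (hA : ∀ j, norm2 (fun i => A i j) = 1)
    (U : ∀ j, Matrix (Fin M) (Fin (m j)) ℝ)
    (hU : ∀ j, (U j)ᵀ * U j = 1)
    (hμ : 0 < fusionCoherence A (fun j => U j * (U j)ᵀ)) :
    ∀ h : (∀ j, Fin (m j) → ℝ), A * Ucmat U h = 0 →
      ∀ j, norm2 (h j) ≤
        (1 + (fusionCoherence A (fun j => U j * (U j)ᵀ))⁻¹)⁻¹ *
          ∑ l, norm2 (h l) := by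
  intro h hAh j
  have hj := norm2_block_le_fusionCoherence_mul_sum_erase hA hU hAh j
  rw [Finset.sum_erase_eq_sub (Finset.mem_univ j)] at hj
  exact le_inv_one_add_inv_mul hμ hj
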